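/- arXiv:1403.6438 — 4 statements merged into one kernel-verified Lean document; each statement's English description precedes it below -/
import Mathlib

section
/- Let F be any field and n ≥ 3. Let 𝔏 be a finite collection of L lines in F^n, and let J be the set of joints formed by 𝔏. Then there exists a constant C_n, depending only on n, such that |J| ≤ C_n · L^{n/(n-1)}. -/
/-- A line in `F^n`: a set of the form `{v + t • b : t ∈ F}` with `b ≠ 0`. -/
def IsLine (F : Type*) [Field F] {n : ℕ} (l : Set (Fin n → F)) : Prop :=
  ∃ v b : Fin n → F, b ≠ 0 ∧ l = {x | ∃ t : F, x = v + t • b}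

/-- `b` is a direction of the line `l`. -/
def IsDirection (F : Type*) [Field F] {n : ℕ} (b : Fin n → F) (l : Set (Fin n → F)) : Prop :=
  b ≠ 0 ∧ ∃ v : Fin n → F, l = {x | ∃ t : F, x = v + t • b}

/-- The lines `l 0, …, l (n-1)` form a joint at `x`: each passes through `x` and
their directions span `F^n`. -/
def FormsJoint (F : Type*) [Field F] {n : ℕ} (l : Fin n → Set (Fin n → F))
    (x : Fin n → F) : Prop :=
  (∀ i, x ∈ l i) ∧ ∃ b : Fin n → Fin n → F,
    (∀ i, IsDirection F (b i) (l i)) ∧ Submodule.span F (Set.range b) = ⊤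

/-- `x` is a joint of the collection `𝔏`: there are (at least) `n` distinct lines of `𝔏`
through `x` whose directions span `F^n`. -/
def IsJoint (F : Type*) [Field F] {n : ℕ} (𝔏 : Set (Set (Fin n → F)))
    (x : Fin n → F) : Prop :=
  ∃ l : Fin n → Set (Fin n → F), Function.Injective l ∧ (∀ i, l i ∈ 𝔏) ∧ FormsJoint F l x

/-- The multiplicity `N(x)`: the number of `n`-tuples of lines of `𝔏` forming a joint at `x`. -/
noncomputable def jointMult (F : Type*) [Field F] {n : ℕ} (𝔏 : Set (Set (Fin n → F)))
    (x : Fin n → F) : ℕ :=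
  Set.ncard {l : Fin n → Set (Fin n → F) | (∀ i, l i ∈ 𝔏) ∧ FormsJoint F l x}

/-- `𝔏` is generic: whenever `n` distinct lines of `𝔏` pass through a common point,
they form a joint there. -/
def Generic (F : Type*) [Field F] {n : ℕ} (𝔏 : Set (Set (Fin n → F))) : Prop :=
  ∀ (l : Fin n → Set (Fin n → F)) (x : Fin n → F), Function.Injective l →
    (∀ i, l i ∈ 𝔏) → (∀ i, x ∈ l i) → FormsJoint F l x


/-
The polynomial method, made to work in every characteristic.

If a finite set `J` of joints has `|J| < (m + 1) ^ n`, linear algebra gives a nonzero polynomial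
`p` of degree at most `n * m` vanishing on `J`. Suppose every line of `𝔏` contains more than
`n * m` points of `J`. Then `p` vanishes identically on each line, so its derivative along each
line vanishes at every joint on it; since the directions at a joint span `F^n`, the gradient of `p`
vanishes on `J`, and the partial derivatives are polynomials of smaller degree vanishing on `J`.
In characteristic `q > 0` they may all be zero without `p` being constant; then `p = g (x ^ q)` and
`g`, of smaller degree, vanishes on the Frobenius image of `J`. This is why vanishing is tracked at
the points `e ∘ x` for a field endomorphism `e`: there is then no counterexample of minimal degree.
Hence some line carries at most `n * m` joints; deleting it and inducting gives
`|J| ≤ n * m * |𝔏|`, and `m = ⌊|J| ^ (1 / n)⌋` yields `|J| ≤ (n * |𝔏|) ^ (n / (n - 1))`.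
-/

open MvPolynomial Polynomial

theorem RingHom.comp_add_smul {R S σ : Type*} [Semiring R] [Semiring S] (e : R →+* S)
    (v b : σ → R) (t : R) : ⇑e ∘ (v + t • b) = ⇑e ∘ v + e t • ⇑e ∘ b := by
  funext i
  simp

theorem Polynomial.eq_zero_of_natDegree_lt_ncard_of_eval_eq_zero {R : Type*} [CommRing R]
    [IsDomain R] (p : R[X]) {s : Set R} (heval : ∀ r ∈ s, p.eval r = 0)
    (hcard : p.natDegree < s.ncard) : p = 0 := by
  have hs : s.Finite := Set.finite_of_ncard_pos (by omega)
  refine eq_zero_of_natDegree_lt_card_of_eval_eq_zero' p hs.toFinset (by simpa using heval) ?_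
  rwa [← Set.ncard_eq_toFinset_card _ hs]

theorem Matrix.mulVec_map_injective_of_span_eq_top {ι F : Type*} [Fintype ι] [DecidableEq ι]
    [Field F] (b : ι → ι → F) (hb : Submodule.span F (Set.range b) = ⊤) (e : F →+* F) :
    Function.Injective ((Matrix.of b).map e).mulVec := by
  have hli : LinearIndependent F b :=
    linearIndependent_of_top_le_span_of_card_eq_finrank hb.ge (by simp)
  exact Matrix.mulVec_injective_iff_isUnit.mpr
    ((Matrix.linearIndependent_rows_iff_isUnit.mp hli).map e.mapMatrix)

namespace MvPolynomial

section LineRestrict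

variable {R σ : Type*} [CommSemiring R]

noncomputable def lineRestrict (v b : σ → R) : MvPolynomial σ R →ₐ[R] R[X] :=
  aeval fun i => Polynomial.C (b i) * Polynomial.X + Polynomial.C (v i)

@[simp]
theorem lineRestrict_X (v b : σ → R) (i : σ) :
    lineRestrict v b (X i) = Polynomial.C (b i) * Polynomial.X + Polynomial.C (v i) :=
  aeval_X _ i

theorem eval_lineRestrict (v b : σ → R) (t : R) (p : MvPolynomial σ R) :
    (lineRestrict v b p).eval t = eval (v + t • b) p := by
  induction p using MvPolynomial.induction_on with
  | C a => simp
  | add p q hp hq => simp [hp, hq]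
  | mul_X p j hp => simp [hp]; ring

theorem natDegree_lineRestrict_le (v b : σ → R) (p : MvPolynomial σ R) :
    (lineRestrict v b p).natDegree ≤ p.totalDegree := by
  conv_lhs => rw [p.as_sum]
  rw [map_sum]
  refine natDegree_sum_le_of_forall_le _ _ fun s hs => le_trans ?_ (le_totalDegree hs)
  rw [lineRestrict, aeval_monomial, ← Polynomial.C_eq_algebraMap]
  refine (natDegree_C_mul_le _ _).trans ?_
  rw [Finsupp.prod, Finsupp.sum]
  refine (natDegree_prod_le _ _).trans <| Finset.sum_le_sum fun i _ => ?_
  exact (natDegree_pow_le_of_le (s i) natDegree_linear_le).trans_eq (mul_one _)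

theorem derivative_lineRestrict [Fintype σ] (v b : σ → R) (p : MvPolynomial σ R) :
    derivative (lineRestrict v b p) =
      lineRestrict v b (∑ i, MvPolynomial.C (b i) * pderiv i p) := by
  classical
  induction p using MvPolynomial.induction_on with
  | C a => simp
  | add p q hp hq => simp only [map_add, hp, hq, mul_add, Finset.sum_add_distrib]
  | mul_X p j hp =>
    have hsum : ∑ i, MvPolynomial.C (b i) * pderiv i (p * X j)
        = (∑ i, MvPolynomial.C (b i) * pderiv i p) * X j + MvPolynomial.C (b j) * p := by
      simp [Pi.single_apply, mul_add, Finset.sum_add_distrib, Finset.sum_mul, mul_assoc,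
        mul_comm (X j)]
      ring
    rw [hsum]
    simp [hp]
    ring

theorem sum_mul_eval_pderiv_eq_zero_of_lineRestrict_eq_zero [Fintype σ] {v b : σ → R}
    {p : MvPolynomial σ R} (h : lineRestrict v b p = 0) (t : R) :
    ∑ i, b i * eval (v + t • b) (pderiv i p) = 0 := by
  have := congrArg (fun q => (derivative q).eval t) h
  rw [derivative_lineRestrict, eval_lineRestrict] at this
  simpa using this

end LineRestrict

theorem totalDegree_pderiv_lt {R σ : Type*} [CommSemiring R] {i : σ} {p : MvPolynomial σ R}
    (h : pderiv i p ≠ 0) : (pderiv i p).totalDegree < p.totalDegree := by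
  have hsucc : ∀ m ∈ (pderiv i p).support, (m.sum fun _ e => e) + 1 ≤ p.totalDegree := by
    intro m hm
    rw [mem_support_iff, coeff_pderiv] at hm
    have := le_totalDegree (mem_support_iff.mpr (left_ne_zero_of_mul hm))
    rwa [Finsupp.sum_add_index' (fun _ => rfl) (fun _ _ _ => rfl),
      Finsupp.sum_single_index rfl] at this
  obtain ⟨m, hm⟩ := support_nonempty.mpr h
  have := hsucc m hm
  have : (pderiv i p).totalDegree ≤ p.totalDegree - 1 :=
    Finset.sup_le fun m hm => Nat.le_sub_one_of_lt (hsucc m hm)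
  omega

theorem exists_expand_eq_of_forall_pderiv_eq_zero {R σ : Type*} [CommRing R] [IsDomain R]
    (q : ℕ) [CharP R q] {p : MvPolynomial σ R} (h : ∀ i, pderiv i p = 0) :
    ∃ g, expand q g = p := by
  have hdvd : ∀ s ∈ p.support, ∀ i, q ∣ s i := by
    intro s hs i
    rcases Nat.eq_zero_or_pos (s i) with h0 | hpos
    · simp [h0]
    have hcoeff := coeff_pderiv (i := i) p (s - Finsupp.single i 1)
    rw [h i, coeff_zero, tsub_add_cancel_of_le (Finsupp.single_le_iff.mpr hpos)] at hcoeff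
    have := (mul_eq_zero.mp hcoeff.symm).resolve_left (mem_support_iff.mp hs)
    rwa [Finsupp.tsub_apply, Finsupp.single_eq_same, ← Nat.cast_add_one,
      Nat.sub_one_add_one hpos.ne', CharP.cast_eq_zero_iff R q] at this
  refine ⟨∑ s ∈ p.support, monomial (s.mapRange (· / q) (Nat.zero_div q)) (coeff s p), ?_⟩
  conv_rhs => rw [p.as_sum]
  rw [map_sum]
  refine Finset.sum_congr rfl fun s hs => ?_
  have hs' : q • s.mapRange (· / q) (Nat.zero_div q) = s := by
    ext i
    simp [Nat.mul_div_cancel' (hdvd s hs i)]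
  rw [expand_monomial, hs']

theorem exists_ne_zero_totalDegree_le_forall_eval_eq_zero {σ F : Type*} [Fintype σ] [Field F]
    {S : Set (σ → F)} (hS : S.Finite) {m : ℕ} (hcard : S.ncard < (m + 1) ^ Fintype.card σ) :
    ∃ p : MvPolynomial σ F, p ≠ 0 ∧ p.totalDegree ≤ Fintype.card σ * m ∧
      ∀ x ∈ S, eval x p = 0 := by
  classical
  have : Fintype S := hS.fintype
  let exps : (σ → Fin (m + 1)) → σ →₀ ℕ := fun c => Finsupp.equivFunOnFinite.symm fun i => c i
  have hexps : Function.Injective exps := by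
    intro c c' h
    funext i
    exact Fin.ext (by simpa [exps] using DFunLike.congr_fun h i)
  let mon : (σ → Fin (m + 1)) → MvPolynomial σ F := fun c => monomial (exps c) 1
  have hmon : LinearIndependent F mon := by
    simpa [mon, Function.comp_def] using (basisMonomials σ F).linearIndependent.comp exps hexps
  let ev : MvPolynomial σ F →ₗ[F] S → F := LinearMap.pi fun x => (aeval x.1).toLinearMap
  have hev : ¬ LinearIndependent F (ev ∘ mon) := fun h => by
    have := h.fintype_card_le_finrank
    rw [Module.finrank_fintype_fun_eq_card, Fintype.card_fun, Fintype.card_fin,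
      ← Nat.card_eq_fintype_card (α := S), Nat.card_coe_set_eq] at this
    omega
  obtain ⟨g, hg, c, hc⟩ := Fintype.not_linearIndependent_iff.mp hev
  refine ⟨∑ c, g c • mon c, fun h0 => hc (Fintype.linearIndependent_iff.mp hmon g h0 c), ?_,
    fun x hx => ?_⟩
  · refine (totalDegree_finsetSum _ _).trans <| Finset.sup_le fun c _ => ?_
    refine (totalDegree_smul_le _ _).trans <| (totalDegree_monomial_le _ _).trans ?_
    rw [Finsupp.sum_fintype _ _ (fun _ => rfl)]
    simpa [exps] using
      Finset.sum_le_sum fun i (_ : i ∈ Finset.univ) => Nat.le_of_lt_succ (c i).isLt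
  · simpa [ev, map_sum] using congrFun hg ⟨x, hx⟩

end MvPolynomial

section Vanishing

variable {F : Type*} [Field F]

theorem lineRestrict_comp_eq_zero_of_lt_ncard {σ : Type*} (e : F →+* F) {J : Set (σ → F)}
    {v b : σ → F} (hb : b ≠ 0) {p : MvPolynomial σ F} {d : ℕ} (hdeg : p.totalDegree ≤ d)
    (hp : ∀ x ∈ J, eval (⇑e ∘ x) p = 0)
    (hrich : d < (J ∩ {x | ∃ t : F, x = v + t • b}).ncard) :
    lineRestrict (⇑e ∘ v) (⇑e ∘ b) p = 0 := by
  set T := {t : F | v + t • b ∈ J}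
  have hJT : J ∩ {x | ∃ t : F, x = v + t • b} = (fun t => v + t • b) '' T := by
    ext x
    constructor
    · rintro ⟨hx, t, rfl⟩
      exact ⟨t, hx, rfl⟩
    · rintro ⟨t, ht, rfl⟩
      exact ⟨ht, t, rfl⟩
  have hinj : Function.Injective fun t : F => v + t • b :=
    fun s t hst => smul_left_injective F hb (add_left_cancel hst)
  refine Polynomial.eq_zero_of_natDegree_lt_ncard_of_eval_eq_zero _ (s := e '' T) ?_ ?_
  · rintro _ ⟨t, ht, rfl⟩
    rw [eval_lineRestrict, ← RingHom.comp_add_smul]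
    exact hp _ ht
  · rw [Set.ncard_image_of_injective _ e.injective, ← Set.ncard_image_of_injective _ hinj, ← hJT]
    exact (natDegree_lineRestrict_le _ _ _).trans_lt (hdeg.trans_lt hrich)

variable {n : ℕ} {𝔏 : Set (Set (Fin n → F))} {J : Set (Fin n → F)} {d : ℕ}

theorem eval_comp_pderiv_eq_zero_of_isJoint (hrich : ∀ ℓ ∈ 𝔏, d < (J ∩ ℓ).ncard)
    {p : MvPolynomial (Fin n) F} (hdeg : p.totalDegree ≤ d) (e : F →+* F)
    (hp : ∀ x ∈ J, eval (⇑e ∘ x) p = 0) {x : Fin n → F} (hx : IsJoint F 𝔏 x) (i : Fin n) :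
    eval (⇑e ∘ x) (pderiv i p) = 0 := by
  obtain ⟨l, -, hl𝔏, hxl, b, hdir, hspan⟩ := hx
  suffices ((Matrix.of b).map e).mulVec (fun i => eval (⇑e ∘ x) (pderiv i p)) = 0 from
    congrFun (Matrix.mulVec_map_injective_of_span_eq_top b hspan e
      (this.trans (Matrix.mulVec_zero _).symm)) i
  funext j
  obtain ⟨hbj, v, hlj⟩ := hdir j
  have hline := lineRestrict_comp_eq_zero_of_lt_ncard e hbj hdeg hp (hlj ▸ hrich _ (hl𝔏 j))
  obtain ⟨t, rfl⟩ : ∃ t : F, x = v + t • b j := by simpa [hlj] using hxl j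
  have := sum_mul_eval_pderiv_eq_zero_of_lineRestrict_eq_zero hline (e t)
  rw [← RingHom.comp_add_smul] at this
  simpa [Matrix.mulVec, dotProduct] using this

theorem eq_zero_of_vanishing_on_rich_joints (hJ : ∀ x ∈ J, IsJoint F 𝔏 x) (hJne : J.Nonempty)
    (hrich : ∀ ℓ ∈ 𝔏, d < (J ∩ ℓ).ncard) (p : MvPolynomial (Fin n) F)
    (hdeg : p.totalDegree ≤ d) (e : F →+* F) (hp : ∀ x ∈ J, eval (⇑e ∘ x) p = 0) : p = 0 := by
  induction hk : p.totalDegree using Nat.strong_induction_on generalizing p e with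
  | _ k ih =>
  have hpderiv : ∀ i, pderiv i p = 0 := by
    intro i
    by_contra hi
    have hlt := hk ▸ totalDegree_pderiv_lt hi
    exact hi (ih _ hlt _ (by omega) e
      (fun x hx => eval_comp_pderiv_eq_zero_of_isJoint hrich hdeg e hp (hJ x hx) i) rfl)
  obtain ⟨g, rfl⟩ := exists_expand_eq_of_forall_pderiv_eq_zero (ringChar F) hpderiv
  rcases Nat.eq_zero_or_pos k with rfl | hkpos
  · obtain ⟨x, hx⟩ := hJne
    rw [totalDegree_eq_zero_iff_eq_C] at hk
    have := hp x hx
    rw [hk, MvPolynomial.eval_C] at this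
    rw [hk, this, map_zero]
  set q := ringChar F
  have hdeg_g : g.totalDegree * q = k := by rw [← totalDegree_expand, hk]
  have hq : 2 ≤ q := by
    have : q ≠ 1 := CharP.ringChar_ne_one
    have : q ≠ 0 := by rintro hq; simp [hq] at hdeg_g; omega
    omega
  have : Fact q.Prime := ⟨CharP.char_is_prime_of_two_le F q hq⟩
  have hlt : g.totalDegree < k := by nlinarith
  rw [ih _ hlt g (by omega) ((frobenius F q).comp e) (fun x hx => ?_) rfl, map_zero]
  rw [← hp x hx, eval_expand]
  -- `(frobenius F q).comp e ∘ x` is `(⇑e ∘ x) ^ q` by definition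
  rfl

theorem exists_mem_ncard_inter_le_of_ncard_lt (hJ : ∀ x ∈ J, IsJoint F 𝔏 x)
    (hJne : J.Nonempty) (hfin : J.Finite) {m : ℕ} (hcard : J.ncard < (m + 1) ^ n) :
    ∃ ℓ ∈ 𝔏, (J ∩ ℓ).ncard ≤ n * m := by
  by_contra! hrich
  obtain ⟨p, hp0, hdeg, hp⟩ := exists_ne_zero_totalDegree_le_forall_eval_eq_zero hfin
    (by rwa [Fintype.card_fin])
  rw [Fintype.card_fin] at hdeg
  exact hp0 (eq_zero_of_vanishing_on_rich_joints hJ hJne hrich p hdeg (RingHom.id F)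
    (by simpa using hp))

end Vanishing

theorem Nat.pow_le_pow_mul_of_le_mul {n m N K : ℕ} (h₁ : m ^ n ≤ N) (h₂ : N ≤ K * m) :
    N ^ n ≤ K ^ n * N :=
  calc N ^ n ≤ (K * m) ^ n := Nat.pow_le_pow_left h₂ n
    _ = K ^ n * m ^ n := mul_pow _ _ _
    _ ≤ K ^ n * N := Nat.mul_le_mul_left _ h₁

def joints (F : Type*) [Field F] {n : ℕ} (𝔏 : Finset (Set (Fin n → F))) : Set (Fin n → F) :=
  {x | IsJoint F ↑𝔏 x}

section Counting

variable {F : Type*} [Field F] {n : ℕ}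

theorem joints_mono {𝔏 𝔏' : Finset (Set (Fin n → F))} (h : 𝔏 ⊆ 𝔏') :
    joints F 𝔏 ⊆ joints F 𝔏' :=
  fun _ ⟨l, hinj, hl, hform⟩ => ⟨l, hinj, fun i => h (hl i), hform⟩

theorem joints_subset_union [DecidableEq (Set (Fin n → F))] (𝔏 : Finset (Set (Fin n → F)))
    (ℓ : Set (Fin n → F)) : joints F 𝔏 ⊆ joints F (𝔏.erase ℓ) ∪ (joints F 𝔏 ∩ ℓ) := by
  intro x hx
  by_cases hxℓ : x ∈ ℓ
  · exact Or.inr ⟨hx, hxℓ⟩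
  obtain ⟨l, hinj, hl, hform⟩ := hx
  exact Or.inl ⟨l, hinj, fun i => Finset.mem_erase.mpr ⟨fun h => hxℓ (h ▸ hform.1 i), hl i⟩,
    hform⟩

theorem ncard_joints_le (m : ℕ) (𝔏 : Finset (Set (Fin n → F))) (hfin : (joints F 𝔏).Finite)
    (hcard : (joints F 𝔏).ncard < (m + 1) ^ n) : (joints F 𝔏).ncard ≤ 𝔏.card * (n * m) := by
  classical
  induction 𝔏 using Finset.strongInduction with
  | H 𝔏 ih =>
  rcases (joints F 𝔏).eq_empty_or_nonempty with hJ | hJne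
  · simp [hJ]
  obtain ⟨ℓ, hℓ, hle⟩ := exists_mem_ncard_inter_le_of_ncard_lt (fun _ hx => hx) hJne hfin hcard
  have hsub : joints F (𝔏.erase ℓ) ⊆ joints F 𝔏 := joints_mono (Finset.erase_subset ℓ 𝔏)
  have ih' := ih _ (Finset.erase_ssubset hℓ) (hfin.subset hsub)
    ((Set.ncard_le_ncard hsub hfin).trans_lt hcard)
  calc (joints F 𝔏).ncard ≤ (joints F (𝔏.erase ℓ) ∪ (joints F 𝔏 ∩ ℓ)).ncard :=
        Set.ncard_le_ncard (joints_subset_union 𝔏 ℓ)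
          ((hfin.subset hsub).union (hfin.subset Set.inter_subset_left))
    _ ≤ (joints F (𝔏.erase ℓ)).ncard + (joints F 𝔏 ∩ ℓ).ncard := Set.ncard_union_le _ _
    _ ≤ (𝔏.erase ℓ).card * (n * m) + n * m := add_le_add ih' hle
    _ = 𝔏.card * (n * m) := by rw [← Finset.card_erase_add_one hℓ, add_one_mul]

theorem ncard_joints_pow_le (hn : n ≠ 0) (𝔏 : Finset (Set (Fin n → F)))
    (hfin : (joints F 𝔏).Finite) :
    (joints F 𝔏).ncard ^ n ≤ (n * 𝔏.card) ^ n * (joints F 𝔏).ncard := by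
  set N := (joints F 𝔏).ncard
  have hN := ncard_joints_le (Nat.nthRoot n N) 𝔏 hfin (Nat.lt_pow_nthRoot_add_one hn N)
  exact Nat.pow_le_pow_mul_of_le_mul (Nat.pow_nthRoot_le (Or.inl hn))
    (hN.trans_eq (by ring))

end Counting

theorem le_rpow_of_pow_le_pow_mul {n : ℕ} (hn : 2 ≤ n) {x y : ℝ} (hx : 0 ≤ x) (hy : 0 ≤ y)
    (h : x ^ n ≤ y ^ n * x) : x ≤ y ^ ((n : ℝ) / ((n : ℝ) - 1)) := by
  rcases hx.eq_or_lt with rfl | hx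
  · positivity
  have hn1 : 0 < (n : ℝ) - 1 := by
    have : (2 : ℝ) ≤ n := by exact_mod_cast hn
    linarith
  have hpow : x ^ ((n : ℝ) - 1) ≤ y ^ (n : ℝ) := by
    rw [Real.rpow_sub_one hx.ne', Real.rpow_natCast, Real.rpow_natCast, div_le_iff₀ hx]
    exact h
  calc x = (x ^ ((n : ℝ) - 1)) ^ ((n : ℝ) - 1)⁻¹ := (Real.rpow_rpow_inv hx.le hn1.ne').symm
    _ ≤ (y ^ (n : ℝ)) ^ ((n : ℝ) - 1)⁻¹ :=
      Real.rpow_le_rpow (by positivity) hpow (inv_nonneg.mpr hn1.le)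
    _ = y ^ ((n : ℝ) / ((n : ℝ) - 1)) := by rw [← Real.rpow_mul hy, div_eq_mul_inv]

/-- **Joints theorem over arbitrary fields.** For `n ≥ 3` there is a constant `C`
depending only on `n` such that for any field `F` and any finite collection `𝔏`
of lines in `F^n`, the set of joints `J` of `𝔏` satisfies `|J| ≤ C · L^{n/(n-1)}`. -/
theorem stmt0 (n : ℕ) (hn : 3 ≤ n) :
    ∃ C : ℝ, ∀ (F : Type) [Field F] (𝔏 : Finset (Set (Fin n → F))),
      (∀ l ∈ 𝔏, IsLine F l) →
      (Set.ncard {x : Fin n → F | IsJoint F ↑𝔏 x} : ℝ) ≤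
        C * (𝔏.card : ℝ) ^ ((n : ℝ) / ((n : ℝ) - 1)) := by
  refine ⟨(n : ℝ) ^ ((n : ℝ) / ((n : ℝ) - 1)), fun F _ 𝔏 _ => ?_⟩
  change ((joints F 𝔏).ncard : ℝ) ≤ _
  by_cases hfin : (joints F 𝔏).Finite
  · have h := ncard_joints_pow_le (by omega) 𝔏 hfin
    rw [← Real.mul_rpow (by positivity) (by positivity)]
    exact le_rpow_of_pow_le_pow_mul (by omega) (by positivity) (by positivity) (by exact_mod_cast h)
  · rw [Set.Infinite.ncard hfin, Nat.cast_zero]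
    positivity
end

section
/- Let F be any field and n ≥ 1. For any finite set P of m points in F^n, there exists a non-zero polynomial f ∈ F[x_1, …, x_n] of total degree at most n·⌈m^{1/n}⌉ which vanishes at every point of P. -/
open MvPolynomial

/-- **Dvir's lemma.** For any finite set `P` of `m` points in `F^n` there is a non-zero
polynomial in `F[x_1, …, x_n]` of total degree at most `n·⌈m^{1/n}⌉` vanishing at every
point of `P`. -/
theorem stmt2 (F : Type*) [Field F] (n : ℕ) (hn : 1 ≤ n) (P : Finset (Fin n → F)) :
    ∃ f : MvPolynomial (Fin n) F, f ≠ 0 ∧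
      f.totalDegree ≤ n * ⌈(P.card : ℝ) ^ (1 / (n : ℝ))⌉₊ ∧
      ∀ p ∈ P, MvPolynomial.eval p f = 0 := by
  classical
  set k : ℕ := ⌈(P.card : ℝ) ^ (1 / (n : ℝ))⌉₊ with hk
  have hn0 : (n : ℝ) ≠ 0 := by positivity
  -- card inequality : P.card < (k+1)^n
  have hcard : P.card < (k + 1) ^ n := by
    have h1 : (P.card : ℝ) ≤ (k : ℝ) ^ n := by
      have : (P.card : ℝ) ^ (1 / (n : ℝ)) ≤ (k : ℝ) := Nat.le_ceil _
      calc (P.card : ℝ) = ((P.card : ℝ) ^ (1 / (n : ℝ))) ^ (n : ℕ) := by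
            rw [← Real.rpow_natCast ((P.card : ℝ) ^ (1 / (n : ℝ))) n,
              ← Real.rpow_mul (by positivity), one_div, inv_mul_cancel₀ hn0, Real.rpow_one]
        _ ≤ (k : ℝ) ^ n := by
            exact pow_le_pow_left₀ (by positivity) this n
    have h2 : P.card ≤ k ^ n := by exact_mod_cast h1
    exact h2.trans_lt (Nat.pow_lt_pow_left (Nat.lt_succ_self k) (by omega))
  -- the space of polynomials with each exponent ≤ k
  set V := restrictDegree (Fin n) F k with hV
  -- index set of the basis
  let S : Set (Fin n →₀ ℕ) := {s | ∀ i, s i ≤ k}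
  have hVS : V = restrictSupport F S := rfl
  let e : S ≃ (Fin n → Fin (k + 1)) :=
    { toFun := fun s i => ⟨s.1 i, Nat.lt_succ_of_le (s.2 i)⟩
      invFun := fun f => ⟨Finsupp.equivFunOnFinite.symm (fun i => (f i : ℕ)),
        fun i => by simpa using Nat.lt_succ_iff.mp (f i).2⟩
      left_inv := fun s => by
        ext i
        simp
      right_inv := fun f => by
        ext i
        simp }
  haveI : Fintype S := Fintype.ofEquiv _ e.symm
  have hScard : Fintype.card S = (k + 1) ^ n := by
    rw [Fintype.card_congr e]
    simp [Fintype.card_fun]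
  have hfinV : Module.finrank F V = (k + 1) ^ n := by
    rw [hVS, Module.finrank_eq_card_basis (basisRestrictSupport F S), hScard]
  -- evaluation linear map
  let L : V →ₗ[F] (↥P → F) :=
    { toFun := fun f p => MvPolynomial.eval (p : Fin n → F) (f : MvPolynomial (Fin n) F)
      map_add' := fun f g => by ext p; simp
      map_smul' := fun c f => by ext p; simp [MvPolynomial.smul_eval] }
  have hfinW : Module.finrank F (↥P → F) = P.card := by
    simp [Module.finrank_pi]
  have hlt : Module.finrank F (↥P → F) < Module.finrank F V := by
    rw [hfinV, hfinW]; exact hcard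
  have hker : LinearMap.ker L ≠ ⊥ := LinearMap.ker_ne_bot_of_finrank_lt hlt
  obtain ⟨f, hfker, hf0⟩ := Submodule.exists_mem_ne_zero_of_ne_bot hker
  refine ⟨(f : MvPolynomial (Fin n) F), ?_, ?_, ?_⟩
  · simpa using hf0
  · -- total degree bound
    rw [MvPolynomial.totalDegree]
    apply Finset.sup_le
    intro s hs
    have hmem := (MvPolynomial.mem_restrictDegree _ _ _).mp f.2 s hs
    calc s.sum (fun _ e => e) = ∑ i, s i := Finsupp.sum_fintype _ _ (fun _ => rfl)
      _ ≤ ∑ _i : Fin n, k := Finset.sum_le_sum (fun i _ => hmem i)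
      _ = n * k := by simp [mul_comm]
  · intro p hp
    have := LinearMap.mem_ker.mp hfker
    have := congrFun this ⟨p, hp⟩
    simpa [L] using this
end

section
/- Let F be a field and n ≥ 3. There is a constant c_n > 0, depending only on n, with the following property: let 𝔏 be a finite set of lines in F^n and let K be a subset of the set of joints of 𝔏. Suppose that for each line l ∈ 𝔏 we have |l ∩ K| ≥ m. Then |K| ≥ c_n · m^n. -/
/-!
Polynomial method. If `|K| < q ^ n`, a dimension count gives a nonzero polynomial `P` of degree
at most `n (q - 1)` vanishing on `K`. On the other hand, no nonzero polynomial of degree `< m`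
vanishes on `K`: it would vanish on every line of `𝔏` (each carries `m` of its zeros), so its
derivative along each line through a joint would vanish, and since the directions at a joint span
`F^n`, so would its gradient. The partial derivatives have smaller degree, so by induction they
vanish identically. Then `P = Q (x ^ p)` with `p` the characteristic (`P` is constant when
`p = 0`), and `Q` has smaller degree and vanishes on the Frobenius image of `K`, which is a
configuration of the same kind. Taking `q = ⌈m / n⌉` gives `|K| ≥ (m / n) ^ n`.
-/

open MvPolynomial Finset
open scoped Polynomial

namespace MvPolynomial

variable {σ R : Type*}

section CommSemiring

variable [CommSemiring R] {P : MvPolynomial σ R}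

lemma totalDegree_pos_of_eval_eq_zero {x : σ → R} (hP : P ≠ 0) (hx : eval x P = 0) :
    0 < P.totalDegree := by
  by_contra! h
  rw [totalDegree_eq_zero_iff_eq_C.mp (Nat.le_zero.mp h)] at hP hx
  simp_all

lemma totalDegree_pderiv_lt_s8 {j : σ} (h : pderiv j P ≠ 0) :
    (pderiv j P).totalDegree < P.totalDegree := by
  obtain ⟨s, hs, hdeg⟩ := Finset.exists_mem_eq_sup _ (support_nonempty.mpr h)
    (fun s : σ →₀ ℕ => s.sum fun _ e => e)
  have hsP : s + Finsupp.single j 1 ∈ P.support := by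
    rw [mem_support_iff, coeff_pderiv] at hs
    exact mem_support_iff.mpr (left_ne_zero_of_mul hs)
  calc (pderiv j P).totalDegree = s.sum fun _ e => e := hdeg
    _ < (s + Finsupp.single j 1).sum fun _ e => e := by
      rw [Finsupp.sum_add_index' (fun _ => rfl) (fun _ _ _ => rfl)]; simp
    _ ≤ P.totalDegree := le_totalDegree hsP

lemma natCast_eq_zero_of_pderiv_eq_zero [NoZeroDivisors R] (h : ∀ j, pderiv j P = 0)
    {s : σ →₀ ℕ} (hs : s ∈ P.support) (j : σ) : ((s j : ℕ) : R) = 0 := by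
  obtain hsj | hsj := Nat.eq_zero_or_pos (s j)
  · simp [hsj]
  have hle : Finsupp.single j 1 ≤ s := Finsupp.single_le_iff.mpr hsj
  have hcoeff := coeff_pderiv (i := j) P (s - Finsupp.single j 1)
  rw [h j, coeff_zero, tsub_add_cancel_of_le hle] at hcoeff
  have hsucc : (s - Finsupp.single j 1 : σ →₀ ℕ) j + 1 = s j := by
    simp only [Finsupp.tsub_apply, Finsupp.single_eq_same]
    omega
  have hcast := (mul_eq_zero.mp hcoeff.symm).resolve_left (mem_support_iff.mp hs)
  rwa [← Nat.cast_add_one, hsucc] at hcast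

lemma exists_expand_eq_of_pderiv_eq_zero [NoZeroDivisors R] (p : ℕ) [CharP R p]
    (h : ∀ j, pderiv j P = 0) : ∃ Q, expand p Q = P := by
  refine ⟨∑ s ∈ P.support, monomial (s.mapRange (· / p) (Nat.zero_div p)) (P.coeff s), ?_⟩
  conv_rhs => rw [P.as_sum]
  rw [map_sum]
  refine Finset.sum_congr rfl fun s hs => ?_
  rw [expand_monomial]
  congr 2
  ext i
  exact Nat.mul_div_cancel' ((CharP.cast_eq_zero_iff R p _).mp
    (natCast_eq_zero_of_pderiv_eq_zero h hs i))

lemma natDegree_aeval_le_totalDegree (g : σ → R[X]) (hg : ∀ i, (g i).natDegree ≤ 1)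
    (P : MvPolynomial σ R) : (aeval g P).natDegree ≤ P.totalDegree := by
  conv_lhs => rw [P.as_sum, map_sum]
  refine Polynomial.natDegree_sum_le_of_forall_le _ _ fun s hs => ?_
  rw [aeval_monomial, ← Polynomial.C_eq_algebraMap]
  refine (Polynomial.natDegree_C_mul_le _ _).trans <| (Polynomial.natDegree_prod_le _ _).trans <|
    le_trans ?_ (le_totalDegree hs)
  refine Finset.sum_le_sum fun i _ => Polynomial.natDegree_pow_le.trans ?_
  simpa using Nat.mul_le_mul_left (s i) (hg i)

lemma derivative_aeval [Fintype σ] (g : σ → R[X]) (P : MvPolynomial σ R) :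
    Polynomial.derivative (aeval g P) =
      ∑ j, aeval g (pderiv j P) * Polynomial.derivative (g j) := by
  classical
  induction P using MvPolynomial.induction_on with
  | C a => simp
  | add p q hp hq => simp [hp, hq, add_mul, Finset.sum_add_distrib]
  | mul_X p i hp =>
    simp only [map_mul, aeval_X, Polynomial.derivative_mul, hp, Derivation.leibniz, pderiv_X,
      smul_eq_mul, map_add, Pi.single_apply, mul_ite, mul_one, mul_zero, apply_ite (aeval g),
      map_zero, add_mul, Finset.sum_add_distrib, ite_mul, zero_mul, Finset.sum_ite_eq,
      Finset.mem_univ, if_true, Finset.sum_mul]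
    rw [add_comm]
    exact congrArg _ (Finset.sum_congr rfl fun _ _ => by ring)

noncomputable def restrictLine (P : MvPolynomial σ R) (x b : σ → R) : R[X] :=
  aeval (fun i => Polynomial.C (x i) + Polynomial.C (b i) * Polynomial.X) P

variable {x b : σ → R}

lemma natDegree_restrictLine_le : (P.restrictLine x b).natDegree ≤ P.totalDegree :=
  natDegree_aeval_le_totalDegree _ (fun _ => by compute_degree) P

lemma eval_restrictLine (t : R) : (P.restrictLine x b).eval t = eval (x + t • b) P := by
  rw [restrictLine, ← Polynomial.coe_aeval_eq_eval, comp_aeval_apply]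
  have hline : (fun i => Polynomial.aeval t (Polynomial.C (x i) + Polynomial.C (b i) *
      Polynomial.X)) = x + t • b := by
    funext i
    simp only [map_add, Polynomial.aeval_C, map_mul, Polynomial.aeval_X, Pi.add_apply,
      Pi.smul_apply, smul_eq_mul, Algebra.algebraMap_self, RingHom.id_apply]
    ring
  rw [hline]
  rfl

lemma derivative_restrictLine [Fintype σ] :
    Polynomial.derivative (P.restrictLine x b) =
      ∑ j, (pderiv j P).restrictLine x b * Polynomial.C (b j) := by
  simp [restrictLine, derivative_aeval]

lemma derivative_restrictLine_eval_zero [Fintype σ] :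
    (Polynomial.derivative (P.restrictLine x b)).eval 0 =
      (fun j => eval x (pderiv j P)) ⬝ᵥ b := by
  simp [derivative_restrictLine, Polynomial.eval_finsetSum, dotProduct, eval_restrictLine]

end CommSemiring

lemma restrictLine_eq_zero [CommRing R] [IsDomain R] {P : MvPolynomial σ R} {x b : σ → R}
    {S : Finset R} (hS : P.totalDegree < #S) (h : ∀ t ∈ S, eval (x + t • b) P = 0) :
    P.restrictLine x b = 0 :=
  Polynomial.eq_zero_of_natDegree_lt_card_of_eval_eq_zero' _ S
    (fun t ht => (eval_restrictLine t).trans (h t ht)) (natDegree_restrictLine_le.trans_lt hS)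

lemma exists_ne_zero_totalDegree_le_eval_eq_zero {F : Type*} [Field F] [Fintype σ]
    (T : Finset (σ → F)) {q : ℕ} (hT : #T < q ^ Fintype.card σ) :
    ∃ P : MvPolynomial σ F, P ≠ 0 ∧ P.totalDegree ≤ Fintype.card σ * (q - 1) ∧
      ∀ x ∈ T, eval x P = 0 := by
  classical
  let e : (σ → Fin q) → σ →₀ ℕ := fun a => Finsupp.equivFunOnFinite.symm fun i => a i
  have he : e.Injective := fun a a' h => by
    ext i
    exact congrFun (Finsupp.equivFunOnFinite.symm.injective h) i
  let v : (σ → Fin q) → T → F := fun a x => eval x.1 (monomial (e a) 1)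
  have hv : ¬ LinearIndependent F v := fun h => by
    have := h.fintype_card_le_finrank
    simp only [Fintype.card_pi, Fintype.card_fin, prod_const, card_univ,
      Module.finrank_fintype_fun_eq_card, Fintype.card_coe] at this
    omega
  obtain ⟨c, hc, a₀, ha₀⟩ := Fintype.not_linearIndependent_iff.mp hv
  refine ⟨∑ a, monomial (e a) (c a), fun h => ha₀ ?_, ?_, fun x hx => ?_⟩
  · simpa [coeff_sum, coeff_monomial, he.eq_iff] using congrArg (coeff (e a₀)) h
  · refine totalDegree_finsetSum_le fun a _ => (totalDegree_monomial_le _ _).trans ?_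
    change (e a).degree ≤ _
    rw [Finsupp.degree_eq_sum]
    simp only [e, Finsupp.coe_equivFunOnFinite_symm]
    calc ∑ i, (a i : ℕ) ≤ ∑ _i : σ, (q - 1) := sum_le_sum fun i _ => Nat.le_sub_one_of_lt (a i).2
      _ = Fintype.card σ * (q - 1) := by simp
  · simpa [v, eval_monomial, Finset.mul_sum, mul_comm] using congrFun hc ⟨x, hx⟩

end MvPolynomial

lemma eq_zero_of_forall_mem_dotProduct_eq_zero {ι R : Type*} [Fintype ι] [CommRing R]
    {B : Set (ι → R)} (hB : Submodule.span R B = ⊤) {w : ι → R} (h : ∀ b ∈ B, w ⬝ᵥ b = 0) :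
    w = 0 := by
  refine dotProduct_eq_zero w fun v => ?_
  have hv : v ∈ Submodule.span R B := hB ▸ Submodule.mem_top
  induction hv using Submodule.span_induction with
  | mem b hb => exact h b hb
  | zero => exact dotProduct_zero w
  | add u v _ _ hu hv => rw [dotProduct_add, hu, hv, add_zero]
  | smul c u _ hu => rw [dotProduct_smul, hu, smul_zero]

lemma Submodule.span_image_compLeft_eq_top {ι R S : Type*} [Finite ι] [Semiring R] [Semiring S]
    (φ : R →+* S) {B : Set (ι → R)} (hB : Submodule.span R B = ⊤) :
    Submodule.span S (φ.compLeft ι '' B) = ⊤ := by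
  classical
  have hmem : ∀ v ∈ Submodule.span R B,
      φ.compLeft ι v ∈ Submodule.span S (φ.compLeft ι '' B) := by
    intro v hv
    induction hv using Submodule.span_induction with
    | mem b hb => exact Submodule.subset_span ⟨b, hb, rfl⟩
    | zero => simp
    | add u v _ _ hu hv => simpa using add_mem hu hv
    | smul c u _ hu =>
      convert Submodule.smul_mem _ (φ c) hu using 1
      ext; simp
  rw [eq_top_iff, ← (Pi.basisFun S ι).span_eq, Submodule.span_le]
  rintro _ ⟨j, rfl⟩
  have hsingle : φ.compLeft ι (Pi.single j 1) = Pi.single j 1 := by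
    ext i
    by_cases h : i = j <;> simp [h]
  simpa [hsingle] using hmem (Pi.single j 1) (hB ▸ Submodule.mem_top)

variable {σ F : Type*} [Field F]

/-- What the polynomial method uses of a set `K` of joints of lines that each contain `m` points
of `K`; unlike being a set of joints, it is preserved by the Frobenius map. -/
def IsRichJointSet (K : Set (σ → F)) (m : ℕ) : Prop :=
  ∀ x ∈ K, ∃ B : Set (σ → F), Submodule.span F B = ⊤ ∧
    ∀ b ∈ B, ∃ S : Finset F, m ≤ #S ∧ ∀ t ∈ S, x + t • b ∈ K

namespace IsRichJointSet

variable {K : Set (σ → F)} {m : ℕ}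

lemma image_compLeft [Finite σ] {F' : Type*} [Field F'] (φ : F →+* F')
    (hK : IsRichJointSet K m) : IsRichJointSet (φ.compLeft σ '' K) m := by
  rintro _ ⟨x, hx, rfl⟩
  obtain ⟨B, hB, hrich⟩ := hK x hx
  refine ⟨φ.compLeft σ '' B, Submodule.span_image_compLeft_eq_top φ hB, ?_⟩
  rintro _ ⟨b, hb, rfl⟩
  obtain ⟨S, hS, hSK⟩ := hrich b hb
  refine ⟨S.map ⟨φ, φ.injective⟩, by simpa using hS, ?_⟩
  simp only [Finset.mem_map, Function.Embedding.coeFn_mk, forall_exists_index, and_imp]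
  rintro _ t ht rfl
  refine ⟨x + t • b, hSK t ht, ?_⟩
  ext; simp

lemma eval_pderiv_eq_zero [Fintype σ] (hK : IsRichJointSet K m) {P : MvPolynomial σ F}
    (hdeg : P.totalDegree < m) (hPK : ∀ x ∈ K, eval x P = 0) {x : σ → F} (hx : x ∈ K) (j : σ) :
    eval x (pderiv j P) = 0 := by
  obtain ⟨B, hB, hrich⟩ := hK x hx
  suffices (fun j => eval x (pderiv j P)) = 0 from congrFun this j
  refine eq_zero_of_forall_mem_dotProduct_eq_zero hB fun b hb => ?_
  obtain ⟨S, hS, hSK⟩ := hrich b hb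
  rw [← derivative_restrictLine_eval_zero,
    restrictLine_eq_zero (hdeg.trans_le hS) fun t ht => hPK _ (hSK t ht)]
  simp

theorem le_totalDegree [Fintype σ] (hK : IsRichJointSet K m) (hne : K.Nonempty)
    {P : MvPolynomial σ F} (hP : P ≠ 0) (hPK : ∀ x ∈ K, eval x P = 0) : m ≤ P.totalDegree := by
  induction hd : P.totalDegree using Nat.strong_induction_on generalizing K P with
  | _ d IH =>
  subst hd
  by_contra! hlt
  have hpos := totalDegree_pos_of_eval_eq_zero hP (hPK _ hne.some_mem)
  have hgrad : ∀ j, pderiv j P = 0 := fun j => by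
    by_contra hj
    have := IH _ (totalDegree_pderiv_lt_s8 hj) hK hne hj
      (fun x hx => hK.eval_pderiv_eq_zero hlt hPK hx j) rfl
    have := totalDegree_pderiv_lt_s8 hj
    omega
  obtain ⟨Q, rfl⟩ := exists_expand_eq_of_pderiv_eq_zero (ringChar F) hgrad
  rw [totalDegree_expand] at hpos hlt
  obtain hp | hp := CharP.char_is_prime_or_zero F (ringChar F)
  · have : ExpChar F (ringChar F) := ExpChar.prime hp
    have hQ : Q ≠ 0 := by rintro rfl; simp at hP
    have := IH Q.totalDegree (by rw [totalDegree_expand]; nlinarith [hp.two_le])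
      (hK.image_compLeft (frobenius F (ringChar F))) (hne.image _) hQ
      (by rintro _ ⟨x, hx, rfl⟩; exact (eval_expand _ x Q).symm.trans (hPK x hx)) rfl
    nlinarith [hp.two_le]
  · simp [hp] at hpos

lemma pow_card_le_ncard [Fintype σ] (hK : IsRichJointSet K m) (hfin : K.Finite)
    (hne : K.Nonempty) {q : ℕ} (hq : Fintype.card σ * (q - 1) < m) :
    q ^ Fintype.card σ ≤ K.ncard := by
  by_contra! h
  rw [Set.ncard_eq_toFinset_card K hfin] at h
  obtain ⟨P, hP, hdeg, hPK⟩ := exists_ne_zero_totalDegree_le_eval_eq_zero hfin.toFinset h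
  have := hK.le_totalDegree hne hP fun x hx => hPK x (hfin.mem_toFinset.mpr hx)
  omega

end IsRichJointSet

lemma pow_le_pow_mul_of_forall_mul_pred_lt {n m k : ℕ} (hn : 0 < n)
    (h : ∀ q, n * (q - 1) < m → q ^ n ≤ k) : m ^ n ≤ n ^ n * k := by
  obtain rfl | hm := Nat.eq_zero_or_pos m
  · simp [zero_pow hn.ne']
  set q := (m - 1) / n + 1
  have hdiv := Nat.div_add_mod (m - 1) n
  have hmod := Nat.mod_lt (m - 1) hn
  have hmq : m ≤ n * q := by
    simp only [q, Nat.mul_add_one]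
    omega
  have hq : n * (q - 1) < m := by
    simp only [q, Nat.add_sub_cancel]
    omega
  calc m ^ n ≤ (n * q) ^ n := Nat.pow_le_pow_left hmq n
    _ = n ^ n * q ^ n := mul_pow n q n
    _ ≤ n ^ n * k := Nat.mul_le_mul_left _ (h q hq)

section Lines

variable {n : ℕ}

lemma IsLine.eq_setOf_of_mem {l : Set (Fin n → F)} (hl : IsLine F l) {x y : Fin n → F}
    (hx : x ∈ l) (hy : y ∈ l) (hxy : x ≠ y) : l = {z | ∃ t : F, z = x + t • (y - x)} := by
  obtain ⟨v, b, -, rfl⟩ := hl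
  obtain ⟨s, rfl⟩ := hx
  obtain ⟨u, rfl⟩ := hy
  have hsu : u - s ≠ 0 := sub_ne_zero.mpr fun h => hxy (by rw [h])
  ext z
  constructor
  · rintro ⟨t, rfl⟩
    refine ⟨(t - s) / (u - s), ?_⟩
    match_scalars <;> field_simp <;> ring
  · rintro ⟨t, rfl⟩
    exact ⟨s + t * (u - s), by module⟩

lemma IsLine.inter_subsingleton {l l' : Set (Fin n → F)} (hl : IsLine F l) (hl' : IsLine F l')
    (hne : l ≠ l') : (l ∩ l').Subsingleton := fun x hx y hy => by
  by_contra hxy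
  exact hne ((hl.eq_setOf_of_mem hx.1 hy.1 hxy).trans (hl'.eq_setOf_of_mem hx.2 hy.2 hxy).symm)

lemma finite_setOf_isJoint (hn : 2 ≤ n) {𝔏 : Finset (Set (Fin n → F))}
    (hL : ∀ l ∈ 𝔏, IsLine F l) : {x | IsJoint F (𝔏 : Set (Set (Fin n → F))) x}.Finite := by
  classical
  have hU : (⋃ l ∈ 𝔏, ⋃ l' ∈ 𝔏.erase l, l ∩ l').Finite :=
    𝔏.finite_toSet.biUnion fun l hl => (𝔏.erase l).finite_toSet.biUnion fun l' hl' =>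
      ((hL l hl).inter_subsingleton (hL l' (mem_of_mem_erase hl'))
        (ne_of_mem_erase hl').symm).finite
  refine hU.subset ?_
  rintro x ⟨ℓ, hinj, hℓ, hx, -⟩
  have h01 : (⟨0, by omega⟩ : Fin n) ≠ ⟨1, by omega⟩ := by simp
  simp only [Set.mem_iUnion]
  exact ⟨_, hℓ _, _, mem_erase.mpr ⟨(hinj.ne h01).symm, hℓ _⟩, hx _, hx _⟩

lemma IsDirection.ncard_inter_eq {b : Fin n → F} {l : Set (Fin n → F)} (hb : IsDirection F b l)
    {x : Fin n → F} (hx : x ∈ l) (K : Set (Fin n → F)) :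
    (l ∩ K).ncard = {t : F | x + t • b ∈ K}.ncard := by
  obtain ⟨hb0, v, rfl⟩ := hb
  obtain ⟨s, rfl⟩ := hx
  have hinj : Function.Injective fun t : F => v + s • b + t • b :=
    (add_right_injective _).comp (smul_left_injective F hb0)
  rw [← Set.ncard_image_of_injective _ hinj]
  congr 1
  ext z
  constructor
  · rintro ⟨⟨t, rfl⟩, hz⟩
    exact ⟨t - s, by simpa [sub_smul] using hz, by module⟩
  · rintro ⟨t, ht, rfl⟩
    exact ⟨⟨s + t, by module⟩, ht⟩

lemma isRichJointSet_of_forall_isJoint {𝔏 : Finset (Set (Fin n → F))} {K : Set (Fin n → F)}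
    {m : ℕ} (hfin : K.Finite) (hK : ∀ x ∈ K, IsJoint F ↑𝔏 x)
    (hm : ∀ l ∈ 𝔏, m ≤ (l ∩ K).ncard) : IsRichJointSet K m := by
  intro x hx
  obtain ⟨ℓ, -, hℓ, hxℓ, b, hb, hspan⟩ := hK x hx
  refine ⟨Set.range b, hspan, ?_⟩
  rintro _ ⟨i, rfl⟩
  have hinj : Function.Injective fun t : F => x + t • b i :=
    (add_right_injective x).comp (smul_left_injective F (hb i).1)
  have hS := hfin.preimage hinj.injOn
  refine ⟨hS.toFinset, ?_, fun t ht => hS.mem_toFinset.mp ht⟩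
  rw [← Set.ncard_eq_toFinset_card _ hS]
  change m ≤ {t : F | x + t • b i ∈ K}.ncard
  rw [← (hb i).ncard_inter_eq (hxℓ i)]
  exact hm _ (hℓ i)

end Lines

/-- For `n ≥ 3` there is a constant `c > 0` depending only on `n` such that for any field
`F`, any nonempty finite set `𝔏` of lines in `F^n` and any subset `K` of the joints of
`𝔏`, if every line of `𝔏` contains at least `m` points of `K` then `|K| ≥ c·m^n`. -/
theorem stmt8 (n : ℕ) (hn : 3 ≤ n) :
    ∃ c : ℝ, 0 < c ∧ ∀ (F : Type) [Field F] (𝔏 : Finset (Set (Fin n → F)))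
      (K : Set (Fin n → F)) (m : ℕ),
      𝔏.Nonempty → (∀ l ∈ 𝔏, IsLine F l) → (∀ x ∈ K, IsJoint F ↑𝔏 x) →
      (∀ l ∈ 𝔏, m ≤ (l ∩ K).ncard) →
      c * (m : ℝ) ^ n ≤ (K.ncard : ℝ) := by
  refine ⟨((n : ℝ) ^ n)⁻¹, by positivity, fun F _ 𝔏 K m h𝔏 hL hK hm => ?_⟩
  have hfin : K.Finite := (finite_setOf_isJoint (by omega) hL).subset hK
  have hrich := isRichJointSet_of_forall_isJoint hfin hK hm
  obtain ⟨l, hl⟩ := h𝔏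
  have key : m ^ n ≤ n ^ n * K.ncard := pow_le_pow_mul_of_forall_mul_pred_lt (by omega)
    fun q hq => by
      have hne : K.Nonempty := (Set.nonempty_of_ncard_ne_zero (s := l ∩ K)
        (by have := hm l hl; omega)).mono Set.inter_subset_right
      simpa using hrich.pow_card_le_ncard hfin hne (q := q) (by simpa using hq)
  rw [inv_mul_le_iff₀ (by positivity)]
  exact_mod_cast key
end

section
/- Let F be a field, n ≥ 3, let 𝔏 be a finite set of lines in F^n, let K be a subset of the set of joints of 𝔏, and let f ∈ F[x_1, …, x_n] be a polynomial such that for every line l ∈ 𝔏 the restriction of f to l is the zero polynomial (i.e., f(v + t·b) = 0 in F[t] where l = {v + t·b : t ∈ F}). Then the formal gradient of f vanishes at every point of K: ∇f(x) = 0 for all x ∈ K. -/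
open MvPolynomial Polynomial in
lemma chain_rule' {F : Type*} [Field F] {n : ℕ} (v b : Fin n → F) (f : MvPolynomial (Fin n) F) :
    Polynomial.derivative (MvPolynomial.aeval
        (fun i => Polynomial.C (v i) + Polynomial.C (b i) * Polynomial.X) f) =
    ∑ j, Polynomial.C (b j) * MvPolynomial.aeval
        (fun i => Polynomial.C (v i) + Polynomial.C (b i) * Polynomial.X)
        (MvPolynomial.pderiv j f) := by
  set φ : Fin n → Polynomial F := fun i => Polynomial.C (v i) + Polynomial.C (b i) * Polynomial.X
    with hφ
  induction f using MvPolynomial.induction_on with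
  | C a => simp
  | add p q hp hq => simp [hp, hq, mul_add, Finset.sum_add_distrib]
  | mul_X p i hp =>
    have h1 : Polynomial.derivative (MvPolynomial.aeval φ (p * MvPolynomial.X i)) =
        Polynomial.derivative (MvPolynomial.aeval φ p) * φ i
          + MvPolynomial.aeval φ p * Polynomial.C (b i) := by
      simp [hφ, Polynomial.derivative_mul]
    have h2 : ∀ j, Polynomial.C (b j) * MvPolynomial.aeval φ
          (MvPolynomial.pderiv j (p * MvPolynomial.X i)) =
        Polynomial.C (b j) * MvPolynomial.aeval φ (MvPolynomial.pderiv j p) * φ i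
          + (if i = j then Polynomial.C (b i) * MvPolynomial.aeval φ p else 0) := by
      intro j
      rw [Derivation.leibniz]
      simp only [smul_eq_mul, map_add, map_mul, MvPolynomial.aeval_X,
        MvPolynomial.pderiv_X, Pi.single_apply]
      split
      · next h => subst h; simp; ring
      · simp; ring
    rw [h1, hp, Finset.sum_congr rfl (fun j _ => h2 j), Finset.sum_add_distrib,
      Finset.sum_ite_eq, Finset.sum_mul]
    simp [mul_comm]

lemma eval_line' {F : Type*} [Field F] {n : ℕ} (v b : Fin n → F) (t : F)
    (g : MvPolynomial (Fin n) F) :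
    Polynomial.eval t (MvPolynomial.aeval
        (fun i => Polynomial.C (v i) + Polynomial.C (b i) * Polynomial.X) g) =
    MvPolynomial.eval (v + t • b) g := by
  induction g using MvPolynomial.induction_on with
  | C a => simp
  | add p q hp hq => simp [hp, hq]
  | mul_X p i hp =>
    simp only [map_mul, MvPolynomial.aeval_X, Polynomial.eval_mul, Polynomial.eval_add,
      Polynomial.eval_C, Polynomial.eval_X, hp, MvPolynomial.eval_mul, MvPolynomial.eval_X,
      Pi.add_apply, Pi.smul_apply, smul_eq_mul]
    ring

/-- If `𝔏` is a finite set of lines in `F^n`, `K` is a subset of the joints of `𝔏`, and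
`f ∈ F[x_1, …, x_n]` restricts to the zero polynomial on every line of `𝔏`, then the
formal gradient of `f` vanishes at every point of `K`. -/
theorem stmt14 (F : Type*) [Field F] (n : ℕ) (hn : 3 ≤ n)
    (𝔏 : Finset (Set (Fin n → F))) (hlines : ∀ l ∈ 𝔏, IsLine F l)
    (K : Set (Fin n → F)) (hK : ∀ x ∈ K, IsJoint F ↑𝔏 x)
    (f : MvPolynomial (Fin n) F)
    (hf : ∀ l ∈ 𝔏, ∀ v b : Fin n → F, b ≠ 0 → l = {x | ∃ t : F, x = v + t • b} →
      MvPolynomial.aeval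
        (fun i => Polynomial.C (v i) + Polynomial.C (b i) * Polynomial.X) f =
        (0 : Polynomial F)) :
    ∀ x ∈ K, ∀ i, MvPolynomial.eval x (MvPolynomial.pderiv i f) = 0 := by
  intro x hx i
  obtain ⟨l, hlinj, hlmem, hthru, b, hdir, hspan⟩ := hK x hx
  -- the gradient functional
  set g : Fin n → F := fun j => MvPolynomial.eval x (MvPolynomial.pderiv j f) with hg
  let L : (Fin n → F) →ₗ[F] F :=
    { toFun := fun c => ∑ j, c j * g j
      map_add' := by intro c d; simp [add_mul, Finset.sum_add_distrib]
      map_smul' := by intro r c; simp [Finset.mul_sum, mul_assoc]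
    }
  have hLb : ∀ k, L (b k) = 0 := by
    intro k
    obtain ⟨hbne, w, hw⟩ := hdir k
    obtain ⟨t, ht⟩ := (hw ▸ hthru k : x ∈ {y | ∃ t : F, y = w + t • b k})
    have h0 := hf (l k) (hlmem k) w (b k) hbne hw
    have hd : Polynomial.derivative (MvPolynomial.aeval
        (fun i => Polynomial.C (w i) + Polynomial.C (b k i) * Polynomial.X) f) = 0 := by
      rw [h0]; simp
    have := chain_rule' w (b k) f
    rw [hd] at this
    have heval := congrArg (Polynomial.eval t) this.symm
    simp only [Polynomial.eval_zero, Polynomial.eval_finset_sum, Polynomial.eval_mul,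
      Polynomial.eval_C] at heval
    have : ∑ j, b k j * MvPolynomial.eval (w + t • b k) (MvPolynomial.pderiv j f) = 0 := by
      rw [← heval]
      exact Finset.sum_congr rfl fun j _ => by rw [eval_line']
    rw [← ht] at this
    exact this
  have hker : Submodule.span F (Set.range b) ≤ LinearMap.ker L := by
    rw [Submodule.span_le]
    rintro _ ⟨k, rfl⟩
    exact hLb k
  have hL0 : L = 0 := by
    apply LinearMap.ext
    intro c
    have : c ∈ LinearMap.ker L := hker (hspan ▸ Submodule.mem_top)
    simpa using this
  have h0' := LinearMap.congr_fun hL0 (Pi.single i 1)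
  rw [LinearMap.zero_apply] at h0'
  have h2 : ∑ j, (Pi.single i 1 : Fin n → F) j * g j = 0 := h0'
  rwa [Finset.sum_eq_single i (fun j _ hj => by simp [Pi.single_apply, Ne.symm hj])
    (by simp), Pi.single_eq_same, one_mul] at h2
end
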